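/- arXiv:1704.01674 — 4 statements merged into one kernel-verified Lean document; each statement's English description precedes it below -/
import Mathlib

section
/- Let $P=(A_P,B_P,C_P,D_P)$ and let $K_1$ be a static controller $D_{K_1}$ and $K_2=(A_K,B_K,C_K,D_{K_2})$ a dynamic controller, with all relevant feedback inverses existing. Then the closed-loop dynamics matrix of $K_2$ closed around the plant $\mathcal{C}(P,D_{K_1})$ (the LFT of $P$ and $D_{K_1}$) equals the closed-loop dynamics matrix of the controller $K_1+K_2$ (with state-space $(A_K,B_K,C_K,D_{K_1}+D_{K_2})$) closed around $P$: $A_{CL}(\mathcal{C}(P,K_1),K_2) = A_{CL}(P,K_1+K_2)$. -/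
open Matrix

/-- Closed-loop dynamics matrix of a dynamic controller `(AK, BK, CK, DK)` closed
around a plant `(AP, BP, CP, DP)`. -/
noncomputable def Acl {n k p q : Type*}
    [Fintype n] [DecidableEq n] [Fintype k] [DecidableEq k]
    [Fintype p] [DecidableEq p] [Fintype q] [DecidableEq q]
    (AP : Matrix n n ℝ) (BP : Matrix n p ℝ) (CP : Matrix q n ℝ) (DP : Matrix q p ℝ)
    (AK : Matrix k k ℝ) (BK : Matrix k q ℝ) (CK : Matrix p k ℝ) (DK : Matrix p q ℝ) :
    Matrix (n ⊕ k) (n ⊕ k) ℝ :=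
  Matrix.fromBlocks
    (AP + BP * (1 - DK * DP)⁻¹ * DK * CP) (BP * (1 - DK * DP)⁻¹ * CK)
    (BK * (1 - DP * DK)⁻¹ * CP) (AK + BK * DP * (1 - DK * DP)⁻¹ * CK)

section Aux

variable {m n : Type*} [Fintype m] [DecidableEq m] [Fintype n] [DecidableEq n]

lemma aux_isUnit_swap (A : Matrix m n ℝ) (B : Matrix n m ℝ)
    (h : IsUnit (1 - A * B)) : IsUnit (1 - B * A) := by
  rw [Matrix.isUnit_iff_isUnit_det] at h ⊢
  rwa [Matrix.det_one_sub_mul_comm]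

lemma aux_push (A : Matrix m n ℝ) (B : Matrix n m ℝ)
    (h : IsUnit (1 - A * B)) :
    B * (1 - A * B)⁻¹ = (1 - B * A)⁻¹ * B := by
  have h' := aux_isUnit_swap A B h
  have hd : IsUnit (1 - A * B).det := (Matrix.isUnit_iff_isUnit_det _).mp h
  have hd' : IsUnit (1 - B * A).det := (Matrix.isUnit_iff_isUnit_det _).mp h'
  have key : (1 - B * A) * (B * (1 - A * B)⁻¹) = B := by
    have e : (1 - B * A) * B = B * (1 - A * B) := by
      simp [Matrix.sub_mul, Matrix.mul_sub, Matrix.mul_assoc]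
    rw [← Matrix.mul_assoc, e, Matrix.mul_assoc, Matrix.mul_nonsing_inv _ hd,
      Matrix.mul_one]
  calc B * (1 - A * B)⁻¹
      = ((1 - B * A)⁻¹ * (1 - B * A)) * (B * (1 - A * B)⁻¹) := by
        rw [Matrix.nonsing_inv_mul _ hd', Matrix.one_mul]
    _ = (1 - B * A)⁻¹ * B := by rw [Matrix.mul_assoc, key]

end Aux

/-- Closing a dynamic controller `K₂` around the LFT `C(P, DK₁)` of the plant with a
static controller `DK₁` gives the same closed-loop dynamics matrix as closing the
controller `K₁ + K₂ = (AK, BK, CK, DK₁ + DK₂)` around `P`. -/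
theorem stmt_5 {n k nu ny : ℕ}
    (AP : Matrix (Fin n) (Fin n) ℝ) (BP : Matrix (Fin n) (Fin nu) ℝ)
    (CP : Matrix (Fin ny) (Fin n) ℝ) (DP : Matrix (Fin ny) (Fin nu) ℝ)
    (AK : Matrix (Fin k) (Fin k) ℝ) (BK : Matrix (Fin k) (Fin ny) ℝ)
    (CK : Matrix (Fin nu) (Fin k) ℝ)
    (DK1 DK2 : Matrix (Fin nu) (Fin ny) ℝ)
    (h1 : IsUnit (1 - DK1 * DP))
    (h2 : IsUnit (1 - DK2 * (DP * (1 - DK1 * DP)⁻¹)))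
    (h3 : IsUnit (1 - (DK1 + DK2) * DP)) :
    Acl (AP + BP * (1 - DK1 * DP)⁻¹ * DK1 * CP) (BP * (1 - DK1 * DP)⁻¹)
        ((1 - DP * DK1)⁻¹ * CP) (DP * (1 - DK1 * DP)⁻¹)
        AK BK CK DK2 =
      Acl AP BP CP DP AK BK CK (DK1 + DK2) := by
  set E1 := (1 - DK1 * DP)⁻¹ with hE1
  set F1 := (1 - DP * DK1)⁻¹ with hF1def
  set G := (1 - (DK1 + DK2) * DP)⁻¹ with hGdef
  set H := (1 - DP * (DK1 + DK2))⁻¹ with hHdef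
  have hF1 : IsUnit (1 - DP * DK1) := aux_isUnit_swap DK1 DP h1
  have hH' : IsUnit (1 - DP * (DK1 + DK2)) := aux_isUnit_swap _ DP h3
  have d1 : IsUnit (1 - DK1 * DP).det := (Matrix.isUnit_iff_isUnit_det _).mp h1
  have dF1 : IsUnit (1 - DP * DK1).det := (Matrix.isUnit_iff_isUnit_det _).mp hF1
  have dG : IsUnit (1 - (DK1 + DK2) * DP).det := (Matrix.isUnit_iff_isUnit_det _).mp h3
  -- cancellation facts
  have c1 : E1 * (1 - DK1 * DP) = 1 := by rw [hE1, Matrix.nonsing_inv_mul _ d1]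
  have c1' : (1 - DK1 * DP) * E1 = 1 := by rw [hE1, Matrix.mul_nonsing_inv _ d1]
  have cF : F1 * (1 - DP * DK1) = 1 := by rw [hF1def, Matrix.nonsing_inv_mul _ dF1]
  have cF' : (1 - DP * DK1) * F1 = 1 := by rw [hF1def, Matrix.mul_nonsing_inv _ dF1]
  have cG' : (1 - (DK1 + DK2) * DP) * G = 1 := by
    rw [hGdef, Matrix.mul_nonsing_inv _ dG]
  have cGl : G * (1 - (DK1 + DK2) * DP) = 1 := by
    rw [hGdef, Matrix.nonsing_inv_mul _ dG]
  -- push identity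
  have push1 : DP * E1 = F1 * DP := aux_push DK1 DP h1
  -- key factorizations
  have keyA : (1 - (DK1 + DK2) * DP) * E1 = 1 - DK2 * (DP * E1) := by
    have e : (1 - (DK1 + DK2) * DP) = (1 - DK1 * DP) - DK2 * DP := by
      rw [Matrix.add_mul, sub_add_eq_sub_sub]
    rw [e, Matrix.sub_mul, c1', Matrix.mul_assoc]
  have keyB : F1 * (1 - DP * (DK1 + DK2)) = 1 - (DP * E1) * DK2 := by
    have e : (1 - DP * (DK1 + DK2)) = (1 - DP * DK1) - DP * DK2 := by
      rw [Matrix.mul_add, sub_add_eq_sub_sub]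
    rw [e, Matrix.mul_sub, cF, ← Matrix.mul_assoc, ← push1]
  have invA : (1 - DK2 * (DP * E1))⁻¹ = (1 - DK1 * DP) * G := by
    rw [← keyA, Matrix.mul_inv_rev, hE1, Matrix.nonsing_inv_nonsing_inv _ d1]
  have invB : (1 - (DP * E1) * DK2)⁻¹ = H * (1 - DP * DK1) := by
    rw [← keyB, Matrix.mul_inv_rev, hF1def, Matrix.nonsing_inv_nonsing_inv _ dF1]
  -- generic cancellations, right-associated
  have canE : ∀ {α : Type} (X : Matrix (Fin nu) α ℝ),
      E1 * ((1 - DK1 * DP) * X) = X := by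
    intro α X; rw [← Matrix.mul_assoc, c1, Matrix.one_mul]
  have canF : ∀ {α : Type} (X : Matrix (Fin ny) α ℝ),
      (1 - DP * DK1) * (F1 * X) = X := by
    intro α X; rw [← Matrix.mul_assoc, cF', Matrix.one_mul]
  -- the key algebraic identity for the (1,1) block
  have t2 : (1 - (DK1 + DK2) * DP) * (G * (DK2 * F1)) = DK2 * F1 := by
    rw [← Matrix.mul_assoc, cG', Matrix.one_mul]
  have t1 : (1 - (DK1 + DK2) * DP) * (E1 * DK1) = DK1 - DK2 * (F1 * (DP * DK1)) := by
    rw [← Matrix.mul_assoc, keyA, Matrix.sub_mul, Matrix.one_mul,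
      Matrix.mul_assoc DK2 (DP * E1) DK1, push1, Matrix.mul_assoc F1 DP DK1]
  have hL : (1 - (DK1 + DK2) * DP) * (E1 * DK1 + G * (DK2 * F1)) = DK1 + DK2 := by
    rw [Matrix.mul_add, t1, t2]
    have e : DK1 - DK2 * (F1 * (DP * DK1)) + DK2 * F1
        = DK1 + DK2 * (F1 * (1 - DP * DK1)) := by
      rw [Matrix.mul_sub, Matrix.mul_one, Matrix.mul_sub]
      abel
    rw [e, cF, Matrix.mul_one]
  have keyC : E1 * DK1 + G * (DK2 * F1) = G * (DK1 + DK2) :=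
    calc E1 * DK1 + G * (DK2 * F1)
        = G * ((1 - (DK1 + DK2) * DP) * (E1 * DK1 + G * (DK2 * F1))) := by
          conv_rhs => rw [← Matrix.mul_assoc, cGl, Matrix.one_mul]
      _ = G * (DK1 + DK2) := by rw [hL]
  have keyCP : E1 * (DK1 * CP) + G * (DK2 * (F1 * CP)) = G * ((DK1 + DK2) * CP) := by
    have h := congrArg (fun X => X * CP) keyC
    simpa only [Matrix.add_mul, Matrix.mul_assoc] using h
  -- now the blocks
  rw [Acl, Acl, invA, invB, Matrix.fromBlocks_inj]
  refine ⟨?_, ?_, ?_, ?_⟩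
  · -- (1,1) block
    simp only [Matrix.mul_assoc]
    rw [canE, add_assoc, ← Matrix.mul_add, keyCP]
  · -- (1,2) block
    simp only [Matrix.mul_assoc]
    rw [canE]
  · -- (2,1) block
    simp only [Matrix.mul_assoc]
    rw [canF]
  · -- (2,2) block
    simp only [Matrix.mul_assoc]
    rw [canE]
end

section
/- Let $P$ be an FDLTI plant, $\mathcal{S}$ a sparsity pattern, and $(i,j)$ an admissible index of $\mathcal{S}$. For any $D_K\in\mathcal{S}$ static and any scalar $V\in\mathbb{R}$, the controller $D_K^V := D_K + e_i V e_j^T$ also lies in $\mathcal{S}$, and $A_{CL}(e_j^T \mathcal{C}(P,D_K) e_i, V) = A_{CL}(P, D_K^V)$. Consequently, if $\lambda$ is a fixed mode of $P$ with respect to static controllers in $\mathcal{S}$, then $\lambda$ is a fixed mode of the SISO plant $e_j^T\mathcal{C}(P,D_K)e_i$ with respect to all static (scalar) controllers. -/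
/-!
Closing the loop of `P` with `DK` and then closing the loop of the resulting system, through an
input map `L` and an output map `R`, with a gain `K` gives the same closed loop as closing the
loop of `P` with `DK + L K R` directly. The loop matrix `1 - (DK + L K R) DP` is a low-rank
update of `M = 1 - DK DP`; by the Weinstein–Aronszajn identity it is invertible exactly when
the small loop matrix `1 - K (R DP M⁻¹ L)` is, and the Woodbury formula expresses its inverse
through `M⁻¹`. For `L = eᵢ`, `R = eⱼᵀ` the controller `DK + L K R` stays in the pattern, so
every fixed mode of `P` is an eigenvalue of each closed loop of the SISO subsystem.
-/

open Matrix

/-- Closed-loop dynamics matrix for a static controller `DK`. -/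
noncomputable def AclS {n p q : Type*}
    [Fintype n] [DecidableEq n] [Fintype p] [DecidableEq p] [Fintype q] [DecidableEq q]
    (AP : Matrix n n ℂ) (BP : Matrix n p ℂ) (CP : Matrix q n ℂ) (DP : Matrix q p ℂ)
    (DK : Matrix p q ℂ) : Matrix n n ℂ :=
  AP + BP * (1 - DK * DP)⁻¹ * DK * CP

/-- Membership in a sparsity pattern determined by the admissible index set `Adm`. -/
def InS {p q : Type*} (Adm : Set (p × q)) (K : Matrix p q ℂ) : Prop :=
  ∀ ij, ij ∉ Adm → K ij.1 ij.2 = 0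

namespace Matrix

variable {m n α : Type*} [Fintype m] [DecidableEq m] [Fintype n] [DecidableEq n] [CommRing α]

-- Unlike `Matrix.add_mul_mul_inv_eq_sub`, no middle factor has to be invertible.
theorem inv_sub_mul {A : Matrix n n α} (U : Matrix n m α) (V : Matrix m n α) (hA : IsUnit A)
    (hQ : IsUnit (1 - V * A⁻¹ * U)) :
    (A - U * V)⁻¹ = A⁻¹ + A⁻¹ * U * (1 - V * A⁻¹ * U)⁻¹ * V * A⁻¹ := by
  have hA' := (isUnit_iff_isUnit_det A).mp hA
  set Q := 1 - V * A⁻¹ * U with hQdef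
  clear_value Q
  refine inv_eq_right_inv ?_
  calc (A - U * V) * (A⁻¹ + A⁻¹ * U * Q⁻¹ * V * A⁻¹)
      = 1 - U * V * A⁻¹ + U * ((1 - V * A⁻¹ * U) * Q⁻¹) * V * A⁻¹ := by
        simp only [Matrix.sub_mul, Matrix.mul_add, Matrix.mul_sub, Matrix.one_mul,
          Matrix.mul_assoc, mul_nonsing_inv _ hA', mul_nonsing_inv_cancel_left _ _ hA']
    _ = 1 := by
      rw [← hQdef, mul_nonsing_inv _ ((isUnit_iff_isUnit_det Q).mp hQ), Matrix.mul_one,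
        sub_add_cancel]

theorem isUnit_sub_mul_iff {A : Matrix n n α} (U : Matrix n m α) (V : Matrix m n α)
    (hA : IsUnit A) : IsUnit (A - U * V) ↔ IsUnit (1 - V * A⁻¹ * U) := by
  have hAdet := (isUnit_iff_isUnit_det A).mp hA
  have hdet : (A - U * V).det = A.det * (1 - V * A⁻¹ * U).det := by
    simpa [sub_eq_add_neg, Matrix.neg_mul, Matrix.mul_neg] using det_add_mul (-U) V hAdet
  rw [isUnit_iff_isUnit_det, isUnit_iff_isUnit_det (1 - V * A⁻¹ * U), hdet, IsUnit.mul_iff,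
    and_iff_right hAdet]

theorem inv_one_sub_mul_comm {A : Matrix m n α} {B : Matrix n m α} (h : IsUnit (1 - A * B)) :
    (1 - B * A)⁻¹ = 1 + B * (1 - A * B)⁻¹ * A := by
  simpa only [inv_one, Matrix.mul_one, Matrix.one_mul] using
    inv_sub_mul (A := 1) B A isUnit_one (by rwa [inv_one, Matrix.mul_one])

end Matrix

namespace InS

variable {p q : Type*} {Adm : Set (p × q)}

theorem add {K K' : Matrix p q ℂ} (hK : InS Adm K) (hK' : InS Adm K') : InS Adm (K + K') :=
  fun ij hij => by rw [Matrix.add_apply, hK ij hij, hK' ij hij, add_zero]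

theorem single [DecidableEq p] [DecidableEq q] {i : p} {j : q} (hij : (i, j) ∈ Adm) (v : ℂ) :
    InS Adm (Matrix.single i j v) := fun ij hij' =>
  single_apply_of_ne _ _ _ _ _ fun h => hij' (by obtain ⟨rfl, rfl⟩ := h; exact hij)

end InS

theorem one_sub_add_mul_mul_mul {α p q r s : Type*} [Ring α] [DecidableEq p] [Fintype q]
    [Fintype r] [Fintype s] (DK : Matrix p q α) (DP : Matrix q p α) (L : Matrix p r α)
    (K : Matrix r s α) (R : Matrix s q α) :
    1 - (DK + L * K * R) * DP = (1 - DK * DP) - L * (K * R * DP) := by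
  rw [Matrix.add_mul, sub_add_eq_sub_sub, Matrix.mul_assoc L, Matrix.mul_assoc L]

section ClosedLoop

variable {α p q r s : Type*} [CommRing α] [Fintype p] [DecidableEq p] [Fintype q] [Fintype r]
  [DecidableEq r] [Fintype s]

theorem isUnit_one_sub_add_mul_mul_mul_iff {DK : Matrix p q α} {DP : Matrix q p α}
    (L : Matrix p r α) (K : Matrix r s α) (R : Matrix s q α) (hM : IsUnit (1 - DK * DP)) :
    IsUnit (1 - (DK + L * K * R) * DP) ↔ IsUnit (1 - K * (R * DP * (1 - DK * DP)⁻¹ * L)) := by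
  rw [one_sub_add_mul_mul_mul, Matrix.isUnit_sub_mul_iff _ _ hM]
  simp only [Matrix.mul_assoc]

variable {n : Type*} [Fintype n] [DecidableEq n] [DecidableEq q] [DecidableEq s]

theorem AclS_AclS_eq_AclS_add (AP : Matrix n n ℂ) (BP : Matrix n p ℂ) (CP : Matrix q n ℂ)
    (DP : Matrix q p ℂ) (DK : Matrix p q ℂ) (L : Matrix p r ℂ) (K : Matrix r s ℂ)
    (R : Matrix s q ℂ) (hM : IsUnit (1 - DK * DP))
    (hQ : IsUnit (1 - K * (R * DP * (1 - DK * DP)⁻¹ * L))) :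
    AclS (AclS AP BP CP DP DK) (BP * (1 - DK * DP)⁻¹ * L) (R * (1 - DP * DK)⁻¹ * CP)
        (R * DP * (1 - DK * DP)⁻¹ * L) K =
      AclS AP BP CP DP (DK + L * K * R) := by
  set M := 1 - DK * DP with hMdef
  set X := (1 - K * (R * DP * M⁻¹ * L))⁻¹ * K with hXdef
  have hX : X = K + X * (R * DP * M⁻¹ * L) * K := by
    have h := Matrix.nonsing_inv_mul_cancel_left _ K ((Matrix.isUnit_iff_isUnit_det _).mp hQ)
    rw [Matrix.sub_mul, Matrix.one_mul, Matrix.mul_sub] at h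
    simp only [hXdef, Matrix.mul_assoc] at h ⊢
    exact eq_add_of_sub_eq h
  have hN : (1 - (DK + L * K * R) * DP)⁻¹ = M⁻¹ + M⁻¹ * L * X * R * DP * M⁻¹ := by
    rw [one_sub_add_mul_mul_mul,
      Matrix.inv_sub_mul _ _ hM (by simpa only [Matrix.mul_assoc] using hQ)]
    simp only [X, Matrix.mul_assoc]
  have hX' := congrArg (fun Y => BP * M⁻¹ * L * Y * R * CP) hX
  unfold AclS
  rw [Matrix.inv_one_sub_mul_comm hM, ← hMdef, hN, Matrix.mul_assoc (BP * M⁻¹ * L), ← hXdef]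
  simp only [Matrix.mul_add, Matrix.add_mul, Matrix.mul_assoc, Matrix.mul_one] at hX' ⊢
  rw [hX']
  abel

end ClosedLoop

/-- Perturbing a static structured controller at an admissible index stays in the
pattern, equals the closed loop of the SISO subsystem `eⱼᵀ C(P, DK) eᵢ` with the
scalar gain `V`, and hence fixed modes of `P` w.r.t. static `S`-controllers are
fixed modes of that SISO subsystem w.r.t. all static scalar controllers. -/
theorem stmt_7 {n nu ny : ℕ} (Adm : Set (Fin nu × Fin ny))
    (AP : Matrix (Fin n) (Fin n) ℂ) (BP : Matrix (Fin n) (Fin nu) ℂ)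
    (CP : Matrix (Fin ny) (Fin n) ℂ) (DP : Matrix (Fin ny) (Fin nu) ℂ)
    (i : Fin nu) (j : Fin ny) (hij : (i, j) ∈ Adm)
    (DK : Matrix (Fin nu) (Fin ny) ℂ) (hDK : InS Adm DK) :
    (∀ V : ℂ, InS Adm (DK + Matrix.single i j V)) ∧
    (∀ V : ℂ,
      IsUnit (1 - DK * DP) →
      IsUnit (1 - (DK + Matrix.single i j V) * DP) →
      AclS (AclS AP BP CP DP DK)
          (BP * (1 - DK * DP)⁻¹ * Matrix.single i (0 : Fin 1) (1 : ℂ))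
          (Matrix.single (0 : Fin 1) j (1 : ℂ) * (1 - DP * DK)⁻¹ * CP)
          (Matrix.single (0 : Fin 1) j (1 : ℂ) * DP * (1 - DK * DP)⁻¹ *
            Matrix.single i (0 : Fin 1) (1 : ℂ))
          (V • (1 : Matrix (Fin 1) (Fin 1) ℂ)) =
        AclS AP BP CP DP (DK + Matrix.single i j V)) ∧
    (∀ lam : ℂ,
      (∀ DK' : Matrix (Fin nu) (Fin ny) ℂ, InS Adm DK' → IsUnit (1 - DK' * DP) →
        lam ∈ spectrum ℂ (AclS AP BP CP DP DK')) →
      IsUnit (1 - DK * DP) →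
      ∀ V : ℂ,
        IsUnit (1 - V • (1 : Matrix (Fin 1) (Fin 1) ℂ) *
          (Matrix.single (0 : Fin 1) j (1 : ℂ) * DP * (1 - DK * DP)⁻¹ *
            Matrix.single i (0 : Fin 1) (1 : ℂ))) →
        lam ∈ spectrum ℂ (AclS (AclS AP BP CP DP DK)
          (BP * (1 - DK * DP)⁻¹ * Matrix.single i (0 : Fin 1) (1 : ℂ))
          (Matrix.single (0 : Fin 1) j (1 : ℂ) * (1 - DP * DK)⁻¹ * CP)
          (Matrix.single (0 : Fin 1) j (1 : ℂ) * DP * (1 - DK * DP)⁻¹ *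
            Matrix.single i (0 : Fin 1) (1 : ℂ))
          (V • (1 : Matrix (Fin 1) (Fin 1) ℂ)))) := by
  have hgain : ∀ V : ℂ, (Matrix.single i (0 : Fin 1) (1 : ℂ) *
      (V • (1 : Matrix (Fin 1) (Fin 1) ℂ)) * Matrix.single (0 : Fin 1) j (1 : ℂ) :
      Matrix (Fin nu) (Fin ny) ℂ) = Matrix.single i j V := fun V => by
    rw [Matrix.mul_smul, Matrix.mul_one, Matrix.smul_mul, single_mul_single_same, smul_single,
      smul_eq_mul, mul_one, mul_one]
  refine ⟨fun V => hDK.add (InS.single hij V), fun V hM hN => ?_, fun lam hfixed hM V hQ => ?_⟩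
  · rw [← hgain] at hN ⊢
    exact AclS_AclS_eq_AclS_add AP BP CP DP DK _ _ _ hM
      ((isUnit_one_sub_add_mul_mul_mul_iff _ _ _ hM).mp hN)
  · have hN := (isUnit_one_sub_add_mul_mul_mul_iff _ _ _ hM).mpr hQ
    rw [AclS_AclS_eq_AclS_add AP BP CP DP DK _ _ _ hM hQ]
    exact hfixed _ (hDK.add (hgain V ▸ InS.single hij V)) hN
end

section
/- For any FDLTI plant $P$ and any sparsity pattern $\mathcal{S}$, the fixed modes with respect to static controllers equal the fixed modes with respect to finite-order dynamic LTI controllers: $\mathrm{FM}(P,\mathcal{S},\mathcal{T}^s) = \mathrm{FM}(P,\mathcal{S},\mathcal{T}^d)$. -/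
open Matrix

/-- Closed-loop dynamics matrix for a dynamic controller `(AK, BK, CK, DK)`. -/
noncomputable def AclD {n k p q : Type*}
    [Fintype n] [DecidableEq n] [Fintype k] [DecidableEq k]
    [Fintype p] [DecidableEq p] [Fintype q] [DecidableEq q]
    (AP : Matrix n n ℂ) (BP : Matrix n p ℂ) (CP : Matrix q n ℂ) (DP : Matrix q p ℂ)
    (AK : Matrix k k ℂ) (BK : Matrix k q ℂ) (CK : Matrix p k ℂ) (DK : Matrix p q ℂ) :
    Matrix (n ⊕ k) (n ⊕ k) ℂ :=
  Matrix.fromBlocks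
    (AP + BP * (1 - DK * DP)⁻¹ * DK * CP) (BP * (1 - DK * DP)⁻¹ * CK)
    (BK * (1 - DP * DK)⁻¹ * CP) (AK + BK * DP * (1 - DK * DP)⁻¹ * CK)

/-- A dynamic controller lies in the sparsity pattern: entries of its transfer
function `CK (sI - AK)⁻¹ BK + DK` vanish outside `Adm` (for all valid `s`). -/
def KtfInS {k p q : Type*}
    [Fintype k] [DecidableEq k] [Fintype p] [DecidableEq p] [Fintype q] [DecidableEq q]
    (Adm : Set (p × q)) (AK : Matrix k k ℂ) (BK : Matrix k q ℂ)
    (CK : Matrix p k ℂ) (DK : Matrix p q ℂ) : Prop :=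
  ∀ ij, ij ∉ Adm → ∀ s : ℂ, IsUnit (s • (1 : Matrix k k ℂ) - AK) →
    (CK * (s • (1 : Matrix k k ℂ) - AK)⁻¹ * BK + DK) ij.1 ij.2 = 0

/-- Fixed modes of the plant with respect to static controllers in the pattern. -/
noncomputable def FMstat {n p q : Type*}
    [Fintype n] [DecidableEq n] [Fintype p] [DecidableEq p] [Fintype q] [DecidableEq q]
    (AP : Matrix n n ℂ) (BP : Matrix n p ℂ) (CP : Matrix q n ℂ) (DP : Matrix q p ℂ)
    (Adm : Set (p × q)) : Set ℂ :=
  {lam | ∀ DK : Matrix p q ℂ, InS Adm DK → IsUnit (1 - DK * DP) →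
    lam ∈ spectrum ℂ (AclS AP BP CP DP DK)}

/-- Fixed modes of the plant with respect to finite-order dynamic LTI controllers
in the pattern. -/
noncomputable def FMdyn {n p q : Type*}
    [Fintype n] [DecidableEq n] [Fintype p] [DecidableEq p] [Fintype q] [DecidableEq q]
    (AP : Matrix n n ℂ) (BP : Matrix n p ℂ) (CP : Matrix q n ℂ) (DP : Matrix q p ℂ)
    (Adm : Set (p × q)) : Set ℂ :=
  {lam | ∀ (k : ℕ) (AK : Matrix (Fin k) (Fin k) ℂ) (BK : Matrix (Fin k) q ℂ)
      (CK : Matrix p (Fin k) ℂ) (DK : Matrix p q ℂ),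
    KtfInS Adm AK BK CK DK → IsUnit (1 - DK * DP) →
    lam ∈ spectrum ℂ (AclD AP BP CP DP AK BK CK DK)}

/-!
If a dynamic controller `K` kept `λ` off the closed-loop spectrum, shift `AK` by a generic scalar:
`λ` stays off the spectrum and `λ - AK` becomes invertible, so the transfer matrix `K(λ)` is a
constant gain obeying the sparsity pattern. An eigenvector of the closed loop can be read off
any kernel vector of the loop matrix `[λ - A, -B K(λ); -C, 1 - D K(λ)]`, which is therefore
nonsingular. Its determinant at `e • K(λ)` is a nonzero polynomial in `e`, so a generic `e` gives a well-posed
static gain in the pattern whose loop matrix is still nonsingular; by the Schur complement this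
gain moves `λ` as well. Conversely, a static gain is a dynamic controller of order zero.
-/

open Polynomial

theorem Matrix.mem_spectrum_iff_det_sub_eq_zero {m K : Type*} [Fintype m] [DecidableEq m]
    [Field K] {M : Matrix m m K} {lam : K} :
    lam ∈ spectrum K M ↔ (lam • 1 - M).det = 0 := by
  rw [spectrum.mem_iff, Algebra.algebraMap_eq_smul_one, isUnit_iff_isUnit_det,
    isUnit_iff_ne_zero, not_not]

theorem Matrix.finite_setOf_det_add_smul_eq_zero {m K : Type*} [Fintype m] [DecidableEq m]
    [Field K] (P Q : Matrix m m K) {t₀ : K} (h : (P + t₀ • Q).det ≠ 0) :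
    {t : K | (P + t • Q).det = 0}.Finite := by
  set f : K[X] := (P.map C + (X : K[X]) • Q.map C).det
  have hf : ∀ t, f.eval t = (P + t • Q).det := fun t ↦ by
    rw [← coe_evalRingHom, RingHom.map_det]
    congr 1
    ext i j
    simp [mul_comm t]
  have hf0 : f ≠ 0 := fun h0 ↦ h (by rw [← hf, h0, eval_zero])
  refine (finite_setOfPred_isRoot hf0).subset fun t ht ↦ ?_
  simpa [IsRoot, hf] using ht

theorem Matrix.isUnit_one_sub_mul_comm {p q R : Type*} [Fintype p] [DecidableEq p]
    [Fintype q] [DecidableEq q] [CommRing R] {M : Matrix p q R} {N : Matrix q p R}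
    (h : IsUnit (1 - M * N)) : IsUnit (1 - N * M) := by
  rwa [isUnit_iff_isUnit_det, ← det_one_sub_mul_comm, ← isUnit_iff_isUnit_det]

theorem Matrix.inv_one_sub_mul_mul {p q R : Type*} [Fintype p] [DecidableEq p]
    [Fintype q] [DecidableEq q] [CommRing R] {M : Matrix p q R} {N : Matrix q p R}
    (h : IsUnit (1 - M * N)) :
    (1 - M * N)⁻¹ * M = M * (1 - N * M)⁻¹ := by
  obtain ⟨_⟩ := h.nonempty_invertible
  obtain ⟨_⟩ := (isUnit_one_sub_mul_comm h).nonempty_invertible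
  have hcomm : (1 - M * N) * M = M * (1 - N * M) := by
    simp only [Matrix.sub_mul, Matrix.mul_sub, Matrix.one_mul, Matrix.mul_one, Matrix.mul_assoc]
  rw [inv_mul_eq_iff_eq_mul_of_invertible, ← Matrix.mul_assoc, hcomm,
    mul_inv_cancel_right_of_invertible]

theorem Matrix.eq_nonsing_inv_mulVec_of_mulVec_eq {m R : Type*} [Fintype m] [DecidableEq m]
    [CommRing R] {M : Matrix m m R} (hM : IsUnit M) {v w : m → R} (h : M *ᵥ v = w) :
    v = M⁻¹ *ᵥ w := by
  rw [← h, mulVec_mulVec, nonsing_inv_mul _ ((isUnit_iff_isUnit_det _).1 hM), one_mulVec]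

theorem Matrix.mem_spectrum_of_mulVec_eq_smul {m K : Type*} [Fintype m] [DecidableEq m]
    [Field K] {M : Matrix m m K} {lam : K} {v : m → K} (hv : v ≠ 0) (h : M *ᵥ v = lam • v) :
    lam ∈ spectrum K M := by
  rw [mem_spectrum_iff_det_sub_eq_zero, ← exists_mulVec_eq_zero_iff]
  exact ⟨v, hv, by rw [sub_mulVec, smul_mulVec, one_mulVec, h, sub_self]⟩

theorem smul_sub_add_smul {R M : Type*} [Ring R] [AddCommGroup M] [Module R M] (s t : R)
    (a x : M) : s • x - (a + t • x) = (s - t) • x - a := by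
  rw [sub_smul]
  abel

theorem InS.smul {p q : Type*} {Adm : Set (p × q)} {K : Matrix p q ℂ} (h : InS Adm K)
    (e : ℂ) : InS Adm (e • K) := fun ij hij ↦ by
  rw [Matrix.smul_apply, h ij hij, smul_zero]

section

variable {m k p q : Type*} [Fintype m] [DecidableEq m] [Fintype k] [DecidableEq k]
  [Fintype p] [DecidableEq p] [Fintype q] [DecidableEq q]

/-- Kernel vectors `(x, y)` are the state/output pairs of the plant closed through the gain
`M` that oscillate at frequency `lam`. -/
def loopMatrix (lam : ℂ) (A : Matrix m m ℂ) (B : Matrix m p ℂ) (C : Matrix q m ℂ)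
    (D : Matrix q p ℂ) (M : Matrix p q ℂ) : Matrix (m ⊕ q) (m ⊕ q) ℂ :=
  fromBlocks (lam • 1 - A) (-(B * M)) (-C) (1 - D * M)

noncomputable def transferMatrix (AK : Matrix k k ℂ) (BK : Matrix k q ℂ) (CK : Matrix p k ℂ)
    (DK : Matrix p q ℂ) (s : ℂ) : Matrix p q ℂ :=
  CK * (s • 1 - AK)⁻¹ * BK + DK

theorem det_loopMatrix (lam : ℂ) (A : Matrix m m ℂ) (B : Matrix m p ℂ) (C : Matrix q m ℂ)
    (D : Matrix q p ℂ) {M : Matrix p q ℂ} (hM : IsUnit (1 - M * D)) :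
    (loopMatrix lam A B C D M).det = (1 - D * M).det * (lam • 1 - AclS A B C D M).det := by
  obtain ⟨_⟩ := (isUnit_one_sub_mul_comm hM).nonempty_invertible
  rw [loopMatrix, det_fromBlocks₂₂, invOf_eq_nonsing_inv, AclS]
  congr 2
  simp only [Matrix.neg_mul, Matrix.mul_neg, neg_neg]
  rw [Matrix.mul_assoc B M, ← inv_one_sub_mul_mul hM]
  simp only [Matrix.mul_assoc]
  abel

theorem AclD_mulVec (A : Matrix m m ℂ) (B : Matrix m p ℂ) (C : Matrix q m ℂ)
    (D : Matrix q p ℂ) (AK : Matrix k k ℂ) (BK : Matrix k q ℂ) (CK : Matrix p k ℂ)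
    {DK : Matrix p q ℂ} (hX : IsUnit (1 - DK * D))
    {x : m → ℂ} {xK : k → ℂ} {u : p → ℂ} {y : q → ℂ}
    (hy : y = C *ᵥ x + D *ᵥ u) (hu : u = CK *ᵥ xK + DK *ᵥ y) :
    AclD A B C D AK BK CK DK *ᵥ (x ⊕ᵥ xK) =
      (A *ᵥ x + B *ᵥ u) ⊕ᵥ (AK *ᵥ xK + BK *ᵥ y) := by
  have hu' : u = (1 - DK * D)⁻¹ *ᵥ (DK *ᵥ C *ᵥ x + CK *ᵥ xK) := by
    refine eq_nonsing_inv_mulVec_of_mulVec_eq hX ?_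
    rw [sub_mulVec, one_mulVec, ← mulVec_mulVec]
    nth_rewrite 1 [hu]
    rw [hy, mulVec_add]
    abel
  have hy' : y = (1 - D * DK)⁻¹ *ᵥ C *ᵥ x + (D * (1 - DK * D)⁻¹ * CK) *ᵥ xK := by
    have hY := isUnit_one_sub_mul_comm hX
    rw [← inv_one_sub_mul_mul hY, Matrix.mul_assoc, ← mulVec_mulVec, ← mulVec_add]
    refine eq_nonsing_inv_mulVec_of_mulVec_eq hY ?_
    rw [sub_mulVec, one_mulVec, ← mulVec_mulVec]
    nth_rewrite 1 [hy]
    rw [hu, mulVec_add]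
    simp only [mulVec_mulVec]
    abel
  rw [AclD, fromBlocks_mulVec, Sum.elim_comp_inl, Sum.elim_comp_inr, hy', hu']
  simp only [add_mulVec, mulVec_add, mulVec_mulVec, Matrix.mul_assoc]
  congr 1 <;> abel

theorem mem_spectrum_AclD_of_det_loopMatrix_eq_zero {lam : ℂ} (A : Matrix m m ℂ)
    (B : Matrix m p ℂ) (C : Matrix q m ℂ) (D : Matrix q p ℂ) {AK : Matrix k k ℂ}
    (BK : Matrix k q ℂ) (CK : Matrix p k ℂ) {DK : Matrix p q ℂ}
    (hW : IsUnit (lam • 1 - AK)) (hX : IsUnit (1 - DK * D))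
    (h : (loopMatrix lam A B C D (transferMatrix AK BK CK DK lam)).det = 0) :
    lam ∈ spectrum ℂ (AclD A B C D AK BK CK DK) := by
  obtain ⟨z, hz0, hz⟩ := exists_mulVec_eq_zero_iff.2 h
  rw [← Sum.elim_comp_inl_inr z] at hz0 hz
  set x := z ∘ Sum.inl
  set y := z ∘ Sum.inr
  set xK := (lam • 1 - AK)⁻¹ *ᵥ BK *ᵥ y with hxK
  set u := CK *ᵥ xK + DK *ᵥ y with hu
  have hMy : transferMatrix AK BK CK DK lam *ᵥ y = u := by
    simp only [transferMatrix, hu, hxK, add_mulVec, mulVec_mulVec, Matrix.mul_assoc]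
  rw [loopMatrix, fromBlocks_mulVec, Sum.elim_comp_inl, Sum.elim_comp_inr, ← Sum.elim_zero_zero,
    Sum.elim_eq_iff] at hz
  obtain ⟨hplant, houtput⟩ := hz
  rw [sub_mulVec, smul_mulVec, one_mulVec, neg_mulVec, ← mulVec_mulVec, hMy] at hplant
  rw [sub_mulVec, one_mulVec, neg_mulVec, ← mulVec_mulVec, hMy] at houtput
  have hy : y = C *ᵥ x + D *ᵥ u := by
    rw [← sub_eq_zero, ← houtput]
    abel
  have hx : lam • x = A *ᵥ x + B *ᵥ u := by
    rw [← sub_eq_zero, ← hplant]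
    abel
  have hxK' : AK *ᵥ xK + BK *ᵥ y = lam • xK := by
    have hWx : (lam • 1 - AK) *ᵥ xK = BK *ᵥ y := by
      rw [hxK, mulVec_mulVec, mul_nonsing_inv _ ((isUnit_iff_isUnit_det _).1 hW), one_mulVec]
    rw [sub_mulVec, smul_mulVec, one_mulVec] at hWx
    rw [← hWx]
    abel
  refine mem_spectrum_of_mulVec_eq_smul (v := x ⊕ᵥ xK) ?_ ?_
  · intro h0
    rw [← Sum.elim_zero_zero, Sum.elim_eq_iff] at h0
    obtain ⟨hx0, hxK0⟩ := h0
    have hy0 : y = 0 := by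
      refine mulVec_injective_iff_isUnit.2 (isUnit_one_sub_mul_comm hX) ?_
      rw [mulVec_zero, sub_mulVec, one_mulVec, ← mulVec_mulVec, sub_eq_zero]
      nth_rewrite 1 [hy]
      rw [hu, hx0, hxK0, mulVec_zero, mulVec_zero, zero_add, zero_add]
    exact hz0 (by rw [hx0, hy0, Sum.elim_zero_zero])
  · rw [AclD_mulVec A B C D AK BK CK hX hy hu, ← hx, hxK']
    ext (i | i) <;> rfl

theorem KtfInS.add_smul_one {Adm : Set (p × q)} {AK : Matrix k k ℂ} {BK : Matrix k q ℂ}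
    {CK : Matrix p k ℂ} {DK : Matrix p q ℂ} (h : KtfInS Adm AK BK CK DK) (t : ℂ) :
    KtfInS Adm (AK + t • 1) BK CK DK := by
  intro ij hij s hs
  rw [smul_sub_add_smul] at hs ⊢
  exact h ij hij (s - t) hs

theorem AclD_add_smul_one (A : Matrix m m ℂ) (B : Matrix m p ℂ) (C : Matrix q m ℂ)
    (D : Matrix q p ℂ) (AK : Matrix k k ℂ) (BK : Matrix k q ℂ) (CK : Matrix p k ℂ)
    (DK : Matrix p q ℂ) (t : ℂ) :
    AclD A B C D (AK + t • 1) BK CK DK = AclD A B C D AK BK CK DK + t • fromBlocks 0 0 0 1 := by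
  rw [AclD, AclD, fromBlocks_smul, fromBlocks_add]
  simp only [smul_zero, add_zero]
  congr 1
  abel

theorem exists_shift_notMem_spectrum_AclD {lam : ℂ} (A : Matrix m m ℂ) (B : Matrix m p ℂ)
    (C : Matrix q m ℂ) (D : Matrix q p ℂ) (AK : Matrix k k ℂ) (BK : Matrix k q ℂ)
    (CK : Matrix p k ℂ) (DK : Matrix p q ℂ)
    (h : lam ∉ spectrum ℂ (AclD A B C D AK BK CK DK)) :
    ∃ t : ℂ, IsUnit (lam • 1 - (AK + t • 1)) ∧
      lam ∉ spectrum ℂ (AclD A B C D (AK + t • 1) BK CK DK) := by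
  have hAK : ((fun t ↦ lam - t) ⁻¹' spectrum ℂ AK).Finite :=
    (Matrix.finite_spectrum AK).preimage sub_right_injective.injOn
  have hcl := finite_setOf_det_add_smul_eq_zero (lam • 1 - AclD A B C D AK BK CK DK)
    (-fromBlocks 0 0 0 1) (t₀ := 0)
    (by rwa [zero_smul, add_zero, ne_eq, ← mem_spectrum_iff_det_sub_eq_zero])
  obtain ⟨t, ht⟩ := (hAK.union hcl).infinite_compl.nonempty
  rw [Set.mem_compl_iff, Set.mem_union, not_or] at ht
  obtain ⟨hAKt, hclt⟩ := ht
  refine ⟨t, ?_, ?_⟩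
  · rwa [smul_sub_add_smul, ← Algebra.algebraMap_eq_smul_one, ← spectrum.notMem_iff]
  · rwa [mem_spectrum_iff_det_sub_eq_zero, AclD_add_smul_one, ← sub_sub,
      sub_eq_add_neg _ (t • _), ← smul_neg]

theorem exists_smul_det_loopMatrix_ne_zero (lam : ℂ) (A : Matrix m m ℂ) (B : Matrix m p ℂ)
    (C : Matrix q m ℂ) (D : Matrix q p ℂ) {M : Matrix p q ℂ}
    (h : (loopMatrix lam A B C D M).det ≠ 0) :
    ∃ e : ℂ, (loopMatrix lam A B C D (e • M)).det ≠ 0 ∧ IsUnit (1 - (e • M) * D) := by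
  have hloop : ∀ e : ℂ, loopMatrix lam A B C D (e • M) =
      fromBlocks (lam • 1 - A) 0 (-C) 1 + e • fromBlocks 0 (-(B * M)) 0 (-(D * M)) := by
    intro e
    rw [loopMatrix, fromBlocks_smul, fromBlocks_add]
    simp only [smul_zero, add_zero, zero_sub, Matrix.mul_smul, smul_neg, ← sub_eq_add_neg]
  have hwp : ∀ e : ℂ, 1 - (e • M) * D = 1 + e • -(M * D) := by
    intro e
    rw [Matrix.smul_mul, smul_neg, ← sub_eq_add_neg]
  have hloop_fin := finite_setOf_det_add_smul_eq_zero (fromBlocks (lam • 1 - A) 0 (-C) 1)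
    (fromBlocks 0 (-(B * M)) 0 (-(D * M))) (t₀ := 1) (by rwa [← hloop, one_smul])
  have hwp_fin := finite_setOf_det_add_smul_eq_zero 1 (-(M * D)) (t₀ := 0)
    (by rw [zero_smul, add_zero, det_one]; exact one_ne_zero)
  obtain ⟨e, he⟩ := (hloop_fin.union hwp_fin).infinite_compl.nonempty
  rw [Set.mem_compl_iff, Set.mem_union, not_or] at he
  refine ⟨e, by rw [hloop]; exact he.1, ?_⟩
  rw [isUnit_iff_isUnit_det, isUnit_iff_ne_zero, hwp]
  exact he.2

theorem spectrum_AclD_of_isEmpty [IsEmpty k] (A : Matrix m m ℂ) (B : Matrix m p ℂ)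
    (C : Matrix q m ℂ) (D : Matrix q p ℂ) (AK : Matrix k k ℂ) (BK : Matrix k q ℂ)
    (CK : Matrix p k ℂ) (DK : Matrix p q ℂ) :
    spectrum ℂ (AclD A B C D AK BK CK DK) = spectrum ℂ (AclS A B C D DK) := by
  ext lam
  have hsub : (lam • 1 - AclD A B C D AK BK CK DK).submatrix (Equiv.sumEmpty m k).symm
      (Equiv.sumEmpty m k).symm = lam • 1 - AclS A B C D DK := by
    ext i j
    simp [AclD, AclS, one_apply]
  rw [mem_spectrum_iff_det_sub_eq_zero, mem_spectrum_iff_det_sub_eq_zero, ← hsub,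
    det_submatrix_equiv_self]

theorem KtfInS_of_isEmpty [IsEmpty k] {Adm : Set (p × q)} (AK : Matrix k k ℂ)
    (BK : Matrix k q ℂ) (CK : Matrix p k ℂ) {DK : Matrix p q ℂ} (h : InS Adm DK) :
    KtfInS Adm AK BK CK DK := by
  intro ij hij s _
  rw [Subsingleton.elim CK 0, Matrix.zero_mul, Matrix.zero_mul, zero_add]
  exact h ij hij

end

/-- For any plant and any sparsity pattern, the fixed modes with respect to static
controllers equal the fixed modes with respect to finite-order dynamic LTI
controllers. -/
theorem stmt_9 {n nu ny : ℕ}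
    (AP : Matrix (Fin n) (Fin n) ℂ) (BP : Matrix (Fin n) (Fin nu) ℂ)
    (CP : Matrix (Fin ny) (Fin n) ℂ) (DP : Matrix (Fin ny) (Fin nu) ℂ)
    (Adm : Set (Fin nu × Fin ny)) :
    FMstat AP BP CP DP Adm = FMdyn AP BP CP DP Adm := by
  ext lam
  constructor
  · intro hlam k AK BK CK DK hK hX
    by_contra hnot
    obtain ⟨t, hW, hnot'⟩ := exists_shift_notMem_spectrum_AclD AP BP CP DP AK BK CK DK hnot
    set M := transferMatrix (AK + t • 1) BK CK DK lam
    have hM : InS Adm M := fun ij hij ↦ hK.add_smul_one t ij hij lam hW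
    have hE : (loopMatrix lam AP BP CP DP M).det ≠ 0 := fun h ↦
      hnot' (mem_spectrum_AclD_of_det_loopMatrix_eq_zero AP BP CP DP BK CK hW hX h)
    obtain ⟨e, he, hXe⟩ := exists_smul_det_loopMatrix_ne_zero lam AP BP CP DP hE
    have hfixed := hlam (e • M) (hM.smul e) hXe
    rw [mem_spectrum_iff_det_sub_eq_zero] at hfixed
    exact he (by rw [det_loopMatrix lam AP BP CP DP hXe, hfixed, mul_zero])
  · intro hlam DK hDK hX
    rw [← spectrum_AclD_of_isEmpty AP BP CP DP (0 : Matrix (Fin 0) (Fin 0) ℂ) 0 0]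
    exact hlam 0 0 0 0 DK (KtfInS_of_isEmpty 0 0 0 hDK) hX
end

section
/- Let $K^{(k+1)}$ be a dynamic controller with state-space $(A_K,B_K,C_K,D_K)$, and for a fixed index pair $(i,j)$ define $\tilde{K}^\star = (A_K,\ B_K e_j e_j^T,\ e_i e_i^T C_K,\ 0)$ and $\tilde{K}^{(k)} = K^{(k+1)} - \tilde{K}^\star$ with the natural stacked realization $(\mathrm{diag}(A_K,A_K),\ (B_K; B_Ke_je_j^T),\ (C_K,\ -e_ie_i^TC_K),\ D_K)$. Let $\tilde{P}^{(k)}=\mathcal{C}(P,\tilde{K}^{(k)})$. Then $\mathrm{eig}(A_{CL}(\tilde{P}^{(k)},\tilde{K}^\star)) = \mathrm{eig}(A_{CL}(P,K^{(k+1)})) \cup \mathrm{eig}(A_K)$. -/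
open Matrix

/-!
Write `x_P, x₁, x₂, x⋆` for the states of the plant, of the two copies of the controller
dynamics inside `K̃⁽ᵏ⁾`, and of `K̃⋆`. The copies `x₂` and `x⋆` see the same input `B⋆ y` and
enter the plant input as `-C⋆ x₂` and `C⋆ x⋆`, so the difference `d = x⋆ - x₂` obeys
`ḋ = A_K d`: the shear `x⋆ ↦ x⋆ - x₂` makes the closed-loop matrix block triangular with
diagonal blocks `W` and `A_K`. In `W` (the dynamics on `d = 0`) the state `x₂` no longer feeds
back, so `W` is again block triangular, with diagonal blocks `A_CL(P, K⁽ᵏ⁺¹⁾)` and `A_K`.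
-/

namespace Matrix

variable {R : Type*} [CommRing R] {l m n : Type*}
  [Fintype l] [DecidableEq l] [Fintype m] [DecidableEq m] [Fintype n] [DecidableEq n]

theorem spectrum_fromBlocks_zero₂₁ (A : Matrix m m R) (B : Matrix m n R) (D : Matrix n n R) :
    spectrum R (fromBlocks A B 0 D) = spectrum R A ∪ spectrum R D := by
  ext μ
  simp only [mem_spectrum_iff_not_isUnit_eval_charpoly, charpoly_fromBlocks_zero₂₁,
    Polynomial.eval_mul, IsUnit.mul_iff, Set.mem_union, not_and_or]

theorem spectrum_fromBlocks_zero₁₂ (A : Matrix m m R) (C : Matrix n m R) (D : Matrix n n R) :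
    spectrum R (fromBlocks A 0 C D) = spectrum R A ∪ spectrum R D := by
  ext μ
  simp only [mem_spectrum_iff_not_isUnit_eval_charpoly, charpoly_fromBlocks_zero₁₂,
    Polynomial.eval_mul, IsUnit.mul_iff, Set.mem_union, not_and_or]

theorem spectrum_reindex (e : m ≃ n) (A : Matrix m m R) :
    spectrum R (reindex e e A) = spectrum R A :=
  AlgEquiv.spectrum_eq (reindexAlgEquiv R R e) A

/-- A matrix on `l ⊕ (m ⊕ n)` that is block lower triangular for the splitting `(l ⊕ m) ⊕ n`. -/
theorem spectrum_fromBlocks_assoc_zero₁₂ (A : Matrix l l R) (B : Matrix l m R)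
    (C : Matrix m l R) (D : Matrix m m R) (E : Matrix n l R) (F : Matrix n m R)
    (G : Matrix n n R) :
    spectrum R (fromBlocks A (fromCols B 0) (fromRows C E) (fromBlocks D 0 F G)) =
      spectrum R (fromBlocks A B C D) ∪ spectrum R G := by
  rw [← spectrum_reindex (Equiv.sumAssoc l m n).symm,
    ← spectrum_fromBlocks_zero₁₂ _ (fromCols E F)]
  congr 1
  ext ((_ | _) | _) ((_ | _) | _) <;> rfl

/-- Conjugating by the shear `fromBlocks 1 0 X 1` clears the lower left block exactly when `X`
solves this Riccati-type equation. -/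
theorem spectrum_fromBlocks_of_shear (A : Matrix m m R) (B : Matrix m n R) (C : Matrix n m R)
    (D : Matrix n n R) (X : Matrix n m R) (hX : X * A + C = (D + X * B) * X) :
    spectrum R (fromBlocks A B C D) = spectrum R (A - B * X) ∪ spectrum R (D + X * B) := by
  let T : (Matrix (m ⊕ n) (m ⊕ n) R)ˣ :=
    ⟨fromBlocks 1 0 X 1, fromBlocks 1 0 (-X) 1, by simp [fromBlocks_multiply],
      by simp [fromBlocks_multiply]⟩
  have hT : T * fromBlocks A B C D * T⁻¹ = fromBlocks (A - B * X) B 0 (D + X * B) := by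
    simp [T, fromBlocks_multiply, hX, sub_eq_add_neg, add_comm]
  rw [← spectrum.units_conjugate (u := T), hT, spectrum_fromBlocks_zero₂₁]

end Matrix

section ClosedLoop

variable {n k l p q : Type*} [Fintype n] [DecidableEq n] [Fintype k] [DecidableEq k]
  [Fintype l] [DecidableEq l] [Fintype p] [DecidableEq p] [Fintype q] [DecidableEq q]

theorem AclD_zero_feedthrough (AP : Matrix n n ℂ) (BP : Matrix n p ℂ) (CP : Matrix q n ℂ)
    (DP : Matrix q p ℂ) (AK : Matrix k k ℂ) (BK : Matrix k q ℂ) (CK : Matrix p k ℂ) :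
    AclD AP BP CP DP AK BK CK 0 = fromBlocks AP (BP * CK) (BK * CP) (AK + BK * DP * CK) := by
  simp [AclD]

theorem AclD_stacked (AP : Matrix n n ℂ) (BP : Matrix n p ℂ) (CP : Matrix q n ℂ)
    (DP : Matrix q p ℂ) (AK₁ : Matrix k k ℂ) (AK₂ : Matrix l l ℂ) (BK₁ : Matrix k q ℂ)
    (BK₂ : Matrix l q ℂ) (CK₁ : Matrix p k ℂ) (CK₂ : Matrix p l ℂ) (DK : Matrix p q ℂ)
    (M : Matrix p p ℂ) (hM : M = (1 - DK * DP)⁻¹)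
    (N : Matrix q q ℂ) (hN : N = (1 - DP * DK)⁻¹) :
    AclD AP BP CP DP (fromBlocks AK₁ 0 0 AK₂) (fromRows BK₁ BK₂) (fromCols CK₁ CK₂) DK =
      fromBlocks (AP + BP * M * DK * CP) (fromCols (BP * M * CK₁) (BP * M * CK₂))
        (fromRows (BK₁ * N * CP) (BK₂ * N * CP))
        (fromBlocks (AK₁ + BK₁ * DP * M * CK₁) (BK₁ * DP * M * CK₂)
          (BK₂ * DP * M * CK₁) (AK₂ + BK₂ * DP * M * CK₂)) := by
  subst hM hN
  simp [AclD, mul_fromCols, fromRows_mul, fromBlocks_add]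

end ClosedLoop

theorem stmt_13_general {n k nu ny : ℕ}
    (AP : Matrix (Fin n) (Fin n) ℂ) (BP : Matrix (Fin n) (Fin nu) ℂ)
    (CP : Matrix (Fin ny) (Fin n) ℂ) (DP : Matrix (Fin ny) (Fin nu) ℂ)
    (AK : Matrix (Fin k) (Fin k) ℂ) (BK : Matrix (Fin k) (Fin ny) ℂ)
    (CK : Matrix (Fin nu) (Fin k) ℂ) (DK : Matrix (Fin nu) (Fin ny) ℂ)
    (M : Matrix (Fin nu) (Fin nu) ℂ) (hM : M = (1 - DK * DP)⁻¹)
    (N : Matrix (Fin ny) (Fin ny) ℂ) (hN : N = (1 - DP * DK)⁻¹)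
    (Bstar : Matrix (Fin k) (Fin ny) ℂ)
    (Cstar : Matrix (Fin nu) (Fin k) ℂ)
    (Atk : Matrix (Fin k ⊕ Fin k) (Fin k ⊕ Fin k) ℂ)
    (hAtk : Atk = Matrix.fromBlocks AK 0 0 AK)
    (Btk : Matrix (Fin k ⊕ Fin k) (Fin ny) ℂ)
    (hBtk : Btk = Matrix.fromRows BK Bstar)
    (Ctk : Matrix (Fin nu) (Fin k ⊕ Fin k) ℂ)
    (hCtk : Ctk = Matrix.fromCols CK (-Cstar))
    (Ak' : Matrix (Fin n ⊕ (Fin k ⊕ Fin k)) (Fin n ⊕ (Fin k ⊕ Fin k)) ℂ)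
    (hAk' : Ak' = AclD AP BP CP DP Atk Btk Ctk DK)
    (Bk' : Matrix (Fin n ⊕ (Fin k ⊕ Fin k)) (Fin nu) ℂ)
    (hBk' : Bk' = Matrix.fromRows (BP * M) (Btk * DP * M))
    (Ck' : Matrix (Fin ny) (Fin n ⊕ (Fin k ⊕ Fin k)) ℂ)
    (hCk' : Ck' = Matrix.fromCols (N * CP) (DP * M * Ctk)) :
    spectrum ℂ (AclD Ak' Bk' Ck' (DP * M) AK Bstar Cstar 0) =
      spectrum ℂ (AclD AP BP CP DP AK BK CK DK) ∪ spectrum ℂ AK := by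
  subst hAtk hBtk hCtk hAk' hBk' hCk'
  -- `X` implements the change of coordinates `x⋆ ↦ x⋆ - x₂`
  let X : Matrix (Fin k) (Fin n ⊕ (Fin k ⊕ Fin k)) ℂ := fromCols 0 (fromCols 0 (-1))
  have hXB : AK + Bstar * (DP * M) * Cstar +
      X * (fromRows (BP * M) (fromRows BK Bstar * DP * M) * Cstar) = AK := by
    simp [X, fromRows_mul, fromCols_mul_fromRows, Matrix.mul_assoc]
  rw [AclD_zero_feedthrough, AclD_stacked AP BP CP DP AK AK BK Bstar CK (-Cstar) DK M hM N hN,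
    AclD, ← hM, ← hN, ← Set.union_self (spectrum ℂ AK), ← Set.union_assoc,
    ← spectrum_fromBlocks_assoc_zero₁₂ _ _ _ _ (Bstar * N * CP) (Bstar * DP * M * CK) AK,
    spectrum_fromBlocks_of_shear _ _ _ _ X ?shear, hXB]
  case shear =>
    rw [hXB]
    simp [X, fromCols_mul_fromBlocks, fromCols_mul_fromRows, mul_fromCols, Matrix.mul_assoc]
    ext _ (_ | _ | _) <;> simp
  congr 2
  simp [X, fromRows_mul, mul_fromCols, Matrix.mul_assoc]
  ext (_ | _ | _) (_ | _ | _) <;> simp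

/-- Splitting a dynamic controller `K⁽ᵏ⁺¹⁾` into `K̃⋆` (the dynamics of its
`(i,j)` entry) and `K̃⁽ᵏ⁾ = K⁽ᵏ⁺¹⁾ - K̃⋆` (in the natural stacked realization),
the spectrum of the closed loop of `K̃⋆` around `P̃⁽ᵏ⁾ = C(P, K̃⁽ᵏ⁾)` equals that of
the closed loop of `K⁽ᵏ⁺¹⁾` around `P`, together with the eigenvalues of `A_K`. -/
theorem stmt_13 {n k nu ny : ℕ}
    (AP : Matrix (Fin n) (Fin n) ℂ) (BP : Matrix (Fin n) (Fin nu) ℂ)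
    (CP : Matrix (Fin ny) (Fin n) ℂ) (DP : Matrix (Fin ny) (Fin nu) ℂ)
    (AK : Matrix (Fin k) (Fin k) ℂ) (BK : Matrix (Fin k) (Fin ny) ℂ)
    (CK : Matrix (Fin nu) (Fin k) ℂ) (DK : Matrix (Fin nu) (Fin ny) ℂ)
    (i : Fin nu) (j : Fin ny)
    (hw : IsUnit (1 - DK * DP))
    (M : Matrix (Fin nu) (Fin nu) ℂ) (hM : M = (1 - DK * DP)⁻¹)
    (N : Matrix (Fin ny) (Fin ny) ℂ) (hN : N = (1 - DP * DK)⁻¹)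
    (Bstar : Matrix (Fin k) (Fin ny) ℂ)
    (hBstar : Bstar = BK * Matrix.single j j (1 : ℂ))
    (Cstar : Matrix (Fin nu) (Fin k) ℂ)
    (hCstar : Cstar = Matrix.single i i (1 : ℂ) * CK)
    (Atk : Matrix (Fin k ⊕ Fin k) (Fin k ⊕ Fin k) ℂ)
    (hAtk : Atk = Matrix.fromBlocks AK 0 0 AK)
    (Btk : Matrix (Fin k ⊕ Fin k) (Fin ny) ℂ)
    (hBtk : Btk = Matrix.fromRows BK Bstar)
    (Ctk : Matrix (Fin nu) (Fin k ⊕ Fin k) ℂ)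
    (hCtk : Ctk = Matrix.fromCols CK (-Cstar))
    (Ak' : Matrix (Fin n ⊕ (Fin k ⊕ Fin k)) (Fin n ⊕ (Fin k ⊕ Fin k)) ℂ)
    (hAk' : Ak' = AclD AP BP CP DP Atk Btk Ctk DK)
    (Bk' : Matrix (Fin n ⊕ (Fin k ⊕ Fin k)) (Fin nu) ℂ)
    (hBk' : Bk' = Matrix.fromRows (BP * M) (Btk * DP * M))
    (Ck' : Matrix (Fin ny) (Fin n ⊕ (Fin k ⊕ Fin k)) ℂ)
    (hCk' : Ck' = Matrix.fromCols (N * CP) (DP * M * Ctk)) :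
    spectrum ℂ (AclD Ak' Bk' Ck' (DP * M) AK Bstar Cstar 0) =
      spectrum ℂ (AclD AP BP CP DP AK BK CK DK) ∪ spectrum ℂ AK :=
  stmt_13_general AP BP CP DP AK BK CK DK M hM N hN Bstar Cstar Atk hAtk Btk hBtk Ctk hCtk Ak' hAk'
    Bk' hBk' Ck' hCk'
end
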